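/- arXiv:1003.5076 — 2 statements merged into one kernel-verified Lean document; each statement's English description precedes it below -/
import Mathlib

section
/- The function v(x) = log(1/(1 + (c/8)|x|²)²) on ℝ², with c > 0, satisfies Δv = c e^v on all of ℝ² (with Δ = -∂₁₁ - ∂₂₂), v(0) = 0, and v ≤ 0 everywhere. -/
open Real

noncomputable def geomLap (f : EuclideanSpace ℝ (Fin 2) → ℝ) (x : EuclideanSpace ℝ (Fin 2)) : ℝ :=
  -∑ i : Fin 2, fderiv ℝ (fun y => fderiv ℝ f y (EuclideanSpace.single i 1)) x
      (EuclideanSpace.single i 1)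

/-! With `Q = 1 + a‖x‖²` the bubble is `-2 log Q`, whose Hessian is
`-4a (Id / Q - 2a x ⊗ x / Q²)`. Tracing over an orthonormal basis of an `n`-dimensional space
gives `Δv = 4a (n / Q - 2a‖x‖² / Q²)`, and exactly in the plane `n = 2` the terms combine to
`8a / Q² = 8a e^v`; the choice `a = c / 8` gives `Δv = c e^v`. -/

open scoped RealInnerProductSpace

noncomputable def liouvilleBubble {E : Type*} [NormedAddCommGroup E] [InnerProductSpace ℝ E]
    (a : ℝ) (y : E) : ℝ :=
  -2 * log (1 + a * ‖y‖ ^ 2)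

section
variable {E : Type*} [NormedAddCommGroup E] [InnerProductSpace ℝ E] {a : ℝ}

lemma hasFDerivAt_one_add_mul_norm_sq (a : ℝ) (x : E) :
    HasFDerivAt (fun y : E => 1 + a * ‖y‖ ^ 2) ((2 * a) • innerSL ℝ x) x := by
  refine (((hasStrictFDerivAt_norm_sq x).hasFDerivAt.const_mul a).const_add 1).congr_fderiv ?_
  ext e
  simp only [smul_apply, smul_eq_mul, nsmul_eq_mul]
  push_cast
  ring

lemma hasFDerivAt_liouvilleBubble (ha : 0 ≤ a) (x : E) :
    HasFDerivAt (liouvilleBubble a) ((-4 * a / (1 + a * ‖x‖ ^ 2)) • innerSL ℝ x) x := by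
  refine (((hasFDerivAt_one_add_mul_norm_sq a x).log (by positivity)).const_mul (-2)).congr_fderiv ?_
  ext e
  simp only [smul_apply, smul_eq_mul]
  ring

lemma fderiv_liouvilleBubble_apply (ha : 0 ≤ a) (y e : E) :
    fderiv ℝ (liouvilleBubble a) y e = -4 * a * (⟪e, y⟫ * (1 + a * ‖y‖ ^ 2)⁻¹) := by
  rw [(hasFDerivAt_liouvilleBubble ha y).fderiv, smul_apply,
    innerSL_apply_apply, real_inner_comm, smul_eq_mul]
  ring

lemma hasFDerivAt_inner_mul_inv_one_add_mul_norm_sq (ha : 0 ≤ a) (e x : E) :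
    HasFDerivAt (fun y : E => ⟪e, y⟫ * (1 + a * ‖y‖ ^ 2)⁻¹)
      ((1 + a * ‖x‖ ^ 2)⁻¹ • innerSL ℝ e
        - (2 * a * ⟪e, x⟫ / (1 + a * ‖x‖ ^ 2) ^ 2) • innerSL ℝ x) x := by
  have hQ : 1 + a * ‖x‖ ^ 2 ≠ 0 := by positivity
  refine ((innerSL ℝ e).hasFDerivAt.mul
    ((hasDerivAt_inv hQ).comp_hasFDerivAt x (hasFDerivAt_one_add_mul_norm_sq a x))).congr_fderiv ?_
  ext w
  simp only [add_apply, sub_apply, smul_apply, innerSL_apply_apply, smul_eq_mul, Function.comp_apply]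
  ring

lemma fderiv_fderiv_liouvilleBubble_apply (ha : 0 ≤ a) (x e : E) :
    fderiv ℝ (fun y => fderiv ℝ (liouvilleBubble a) y e) x e
      = -4 * a * (‖e‖ ^ 2 / (1 + a * ‖x‖ ^ 2) - 2 * a * ⟪e, x⟫ ^ 2 / (1 + a * ‖x‖ ^ 2) ^ 2) := by
  simp_rw [fderiv_liouvilleBubble_apply ha]
  rw [fderiv_const_mul (hasFDerivAt_inner_mul_inv_one_add_mul_norm_sq ha e x).differentiableAt,
    (hasFDerivAt_inner_mul_inv_one_add_mul_norm_sq ha e x).fderiv]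
  simp only [smul_apply, sub_apply, innerSL_apply_apply,
    smul_eq_mul, real_inner_self_eq_norm_sq, real_inner_comm x e]
  ring

lemma sum_fderiv_fderiv_liouvilleBubble {ι : Type*} [Fintype ι] (ha : 0 ≤ a)
    (b : OrthonormalBasis ι ℝ E) (x : E) :
    ∑ i, fderiv ℝ (fun y => fderiv ℝ (liouvilleBubble a) y (b i)) x (b i)
      = -4 * a * (Fintype.card ι / (1 + a * ‖x‖ ^ 2) - 2 * a * ‖x‖ ^ 2 / (1 + a * ‖x‖ ^ 2) ^ 2) := by
  simp only [fderiv_fderiv_liouvilleBubble_apply ha, b.orthonormal.1, ← Finset.mul_sum,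
    Finset.sum_sub_distrib, ← Finset.sum_div, b.sum_sq_inner_right]
  simp

lemma exp_liouvilleBubble (ha : 0 ≤ a) (x : E) :
    exp (liouvilleBubble a x) = ((1 + a * ‖x‖ ^ 2) ^ 2)⁻¹ := by
  rw [liouvilleBubble, mul_comm, exp_mul, exp_log (by positivity), rpow_neg (by positivity)]
  norm_cast

lemma liouvilleBubble_zero : liouvilleBubble a (0 : E) = 0 := by
  simp [liouvilleBubble]

lemma liouvilleBubble_nonpos (ha : 0 ≤ a) (x : E) : liouvilleBubble a x ≤ 0 := by
  have : 0 ≤ log (1 + a * ‖x‖ ^ 2) := log_nonneg (by nlinarith [sq_nonneg ‖x‖])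
  rw [liouvilleBubble]
  linarith

end

lemma geomLap_liouvilleBubble {a : ℝ} (ha : 0 ≤ a) (x : EuclideanSpace ℝ (Fin 2)) :
    geomLap (liouvilleBubble a) x = 8 * a * exp (liouvilleBubble a x) := by
  have hQ : 1 + a * ‖x‖ ^ 2 ≠ 0 := by positivity
  have hsum := sum_fderiv_fderiv_liouvilleBubble ha (EuclideanSpace.basisFun (Fin 2) ℝ) x
  simp only [EuclideanSpace.basisFun_apply, Fintype.card_fin] at hsum
  rw [geomLap, hsum, exp_liouvilleBubble ha]
  field_simp
  ring

/-- The standard Liouville bubble `v(x) = log (1/(1+(c/8)|x|²)²)` solves `Δv = c e^v`,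
vanishes at the origin and is nonpositive. -/
theorem standard_bubble_solution (c : ℝ) (hc : 0 < c)
    (v : EuclideanSpace ℝ (Fin 2) → ℝ)
    (hv : ∀ x, v x = Real.log (1 / (1 + (c / 8) * ‖x‖ ^ 2) ^ 2)) :
    (∀ x, geomLap v x = c * Real.exp (v x)) ∧ v 0 = 0 ∧ ∀ x, v x ≤ 0 := by
  have ha : 0 ≤ c / 8 := by positivity
  obtain rfl : v = liouvilleBubble (c / 8) := funext fun x => by
    rw [hv, liouvilleBubble, one_div, log_inv, log_pow]
    push_cast
    ring
  refine ⟨fun x => ?_, liouvilleBubble_zero, liouvilleBubble_nonpos ha⟩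
  rw [geomLap_liouvilleBubble ha]
  ring
end

section
/- For the standard bubble v(x) = -2 log(1 + (c/8)|x|²) with c > 0 and any 0 < λ < √(8/c), the function w_λ(x) = v(x) - v(λ²x/|x|²) - 4 log(λ/|x|) is strictly positive for all |x| > λ and vanishes on |x| = λ. -/
open Real

/-!
Writing `r = |x|` and `s = λ²/r`, the quantity `w_λ(x)` equals `2 (log h(r) - log h(s))` with
`h(t) = t / (1 + (c/8) t²)`, and `h(r) - h(s) = (r - s)(1 - (c/8) r s) / ((1 + (c/8) r²)(1 + (c/8) s²))`.
Since `r s = λ² < 8/c`, this is positive for `r > λ > s` and zero for `r = s = λ`.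
-/

theorem norm_div_norm_sq_smul {E : Type*} [NormedAddCommGroup E] [NormedSpace ℝ E]
    (a : ℝ) (x : E) : ‖(a / ‖x‖ ^ 2) • x‖ = |a| / ‖x‖ := by
  rcases eq_or_ne x 0 with rfl | hx
  · simp
  · have hx : 0 < ‖x‖ := norm_pos_iff.mpr hx
    rw [norm_smul, norm_div, norm_pow, norm_norm, Real.norm_eq_abs]
    field_simp

theorem div_one_add_mul_sq_lt_div_one_add_mul_sq {a s r : ℝ} (ha : 0 ≤ a) (hsr : s < r)
    (hars : a * r * s < 1) : s / (1 + a * s ^ 2) < r / (1 + a * r ^ 2) := by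
  have hs : 0 < 1 + a * s ^ 2 := by positivity
  have hr : 0 < 1 + a * r ^ 2 := by positivity
  rw [div_lt_div_iff₀ hs hr, ← sub_pos]
  have key : r * (1 + a * s ^ 2) - s * (1 + a * r ^ 2) = (r - s) * (1 - a * r * s) := by ring
  rw [key]
  exact mul_pos (sub_pos.mpr hsr) (sub_pos.mpr hars)

theorem bubble_kelvin_sub_eq_log_sub {a lam r : ℝ} (ha : 0 ≤ a) (hlam : 0 < lam) (hr : 0 < r) :
    -2 * log (1 + a * r ^ 2) - -2 * log (1 + a * (lam ^ 2 / r) ^ 2) - 4 * log (lam / r)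
      = 2 * (log (r / (1 + a * r ^ 2)) - log (lam ^ 2 / r / (1 + a * (lam ^ 2 / r) ^ 2))) := by
  have hs : 0 < lam ^ 2 / r := by positivity
  rw [log_div hr.ne' (by positivity), log_div hs.ne' (by positivity),
    log_div (pow_pos hlam 2).ne' hr.ne', log_div hlam.ne' hr.ne', log_pow]
  push_cast
  ring

/-- For the standard bubble and any `0 < λ < √(8/c)`, the function
`w_λ(x) = v(x) - v(λ²x/|x|²) - 4 log(λ/|x|)` is strictly positive for `|x| > λ`
and vanishes on `|x| = λ`. -/
theorem bubble_moving_plane_positivity (c : ℝ) (hc : 0 < c)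
    (v : EuclideanSpace ℝ (Fin 2) → ℝ)
    (hv : ∀ x, v x = -2 * Real.log (1 + (c / 8) * ‖x‖ ^ 2)) :
    ∀ lam : ℝ, 0 < lam → lam < Real.sqrt (8 / c) →
      (∀ x : EuclideanSpace ℝ (Fin 2), lam < ‖x‖ →
        0 < v x - v ((lam ^ 2 / ‖x‖ ^ 2) • x) - 4 * Real.log (lam / ‖x‖)) ∧
      (∀ x : EuclideanSpace ℝ (Fin 2), ‖x‖ = lam →
        v x - v ((lam ^ 2 / ‖x‖ ^ 2) • x) - 4 * Real.log (lam / ‖x‖) = 0) := by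
  intro lam hlam hlamc
  have ha : 0 ≤ c / 8 := by positivity
  have hclam : c / 8 * lam ^ 2 < 1 := by
    have := (lt_sqrt hlam.le).mp hlamc
    rw [lt_div_iff₀ hc] at this
    linarith
  have hw : ∀ x : EuclideanSpace ℝ (Fin 2), lam ≤ ‖x‖ →
      v x - v ((lam ^ 2 / ‖x‖ ^ 2) • x) - 4 * log (lam / ‖x‖)
        = 2 * (log (‖x‖ / (1 + c / 8 * ‖x‖ ^ 2))
          - log (lam ^ 2 / ‖x‖ / (1 + c / 8 * (lam ^ 2 / ‖x‖) ^ 2))) := fun x hx => by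
    rw [hv, hv, norm_div_norm_sq_smul, abs_sq]
    exact bubble_kelvin_sub_eq_log_sub ha hlam (hlam.trans_le hx)
  refine ⟨fun x hx => ?_, fun x hx => ?_⟩
  · have hr : 0 < ‖x‖ := hlam.trans hx
    have hsr : lam ^ 2 / ‖x‖ < ‖x‖ := by
      rw [div_lt_iff₀ hr]
      nlinarith
    have hars : c / 8 * ‖x‖ * (lam ^ 2 / ‖x‖) < 1 := by
      rwa [mul_assoc, mul_div_cancel₀ _ hr.ne']
    rw [hw x hx.le, mul_pos_iff_of_pos_left two_pos, sub_pos]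
    exact log_lt_log (by positivity) (div_one_add_mul_sq_lt_div_one_add_mul_sq ha hsr hars)
  · have hs : lam ^ 2 / lam = lam := by field_simp
    rw [hw x hx.ge, hx, hs, sub_self, mul_zero]
end
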